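/- Let X be the rack of transpositions in S_n (n ≥ 3) under conjugation and c(x,y) = (xyx^{-1}, x). Then the number of c-orbits on X × X is f(n) = C(n,2) + (1/2)·C(n,2)·C(n-2,2) + 2·C(n,3), where the three summands count orbits of size 1, 2, and 3 respectively. Equivalently, f(n) = n(3n^3 − 10n^2 + 21n − 14)/24. -/

import Mathlib

/-!
The map `c(x, y) = (x y x⁻¹, x)` is a permutation of `G × G`, so its orbits on a finite
invariant set number `∑ 1 / (minimal period)`. On pairs of transpositions the period is read
off from how the two supports meet: `c` fixes `(x, x)`, acts as `(x, y) ↦ (y, x)` when `x` and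
`y` commute (disjoint supports), and has order 3 on the remaining pairs, because transpositions
sharing a point satisfy the braid relation `x y x = y x y`. Counting the diagonal and the
disjoint pairs through the supports, which are the 2-element subsets, gives the formula.
-/

open Equiv Finset Function MulAction

section OrbitCount

variable {K : Type*} [DivisionSemiring K] [CharZero K]

theorem card_eq_sum_inv_card_fiber {α β : Type*} [Fintype α] [Fintype β] [DecidableEq β]
    {f : α → β} (hf : Surjective f) :
    (Fintype.card β : K) = ∑ a, (#{a' | f a' = f a} : K)⁻¹ := by
  rw [← Finset.sum_fiberwise Finset.univ f, ← Finset.card_univ, Finset.card_eq_sum_ones,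
    Nat.cast_sum]
  refine Finset.sum_congr rfl fun b _ => ?_
  have hne : (#{a' | f a' = b} : K) ≠ 0 := by
    obtain ⟨a, rfl⟩ := hf b
    exact Nat.cast_ne_zero.2 (Finset.card_ne_zero.2 ⟨a, by simp⟩)
  rw [Finset.sum_congr rfl fun a ha => by rw [(Finset.mem_filter.1 ha).2], Finset.sum_const,
    nsmul_eq_mul, mul_inv_cancel₀ hne, Nat.cast_one]

variable {α : Type*}

theorem quot_mk_eq_iff_mem_orbit_zpowers (σ : Perm α) {p q : α} :
    Quot.mk (fun x y => σ x = y) q = Quot.mk _ p ↔ q ∈ orbit (Subgroup.zpowers σ) p := by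
  constructor
  · intro h
    refine (Equivalence.eqvGen_iff (orbitRel (Subgroup.zpowers σ) α).iseqv).1
      (Relation.EqvGen.mono (fun x y (hxy : σ x = y) => ?_) _ _ (Quot.eqvGen_exact h))
    exact ⟨⟨σ⁻¹, Subgroup.inv_mem _ (Subgroup.mem_zpowers σ)⟩, by simp [← hxy]⟩
  · rintro ⟨⟨g, hg⟩, rfl⟩
    obtain ⟨k, rfl⟩ := Subgroup.mem_zpowers_iff.1 hg
    have step : ∀ x, Quot.mk (fun x y => σ x = y) (σ x) = Quot.mk _ x := fun x =>
      (Quot.sound (r := fun x y => σ x = y) rfl).symm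
    change Quot.mk _ ((σ ^ k) p) = _
    clear hg
    induction k using Int.induction_on with
    | zero => rfl
    | succ k ih => rw [← ih, add_comm, zpow_one_add, Perm.mul_apply, step]
    | pred k ih =>
      have h : (σ ^ (-(k : ℤ))) p = σ ((σ ^ (-(k : ℤ) - 1)) p) := by
        rw [← Perm.mul_apply, ← zpow_one_add, add_sub_cancel]
      rw [← ih, h, step]

theorem card_quot_eq_sum_inv_minimalPeriod [Fintype α] (σ : Perm α) :
    (Nat.card (Quot fun p q : α => σ p = q) : K) = ∑ p, (minimalPeriod σ p : K)⁻¹ := by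
  classical
  have := Fintype.ofFinite (Quot fun p q : α => σ p = q)
  rw [Nat.card_eq_fintype_card, card_eq_sum_inv_card_fiber Quot.mk_surjective]
  refine Finset.sum_congr rfl fun p _ => ?_
  simp_rw [quot_mk_eq_iff_mem_orbit_zpowers]
  rw [← Fintype.card_subtype]
  congr 2
  exact (minimalPeriod_eq_card (a := σ) (b := p)).symm

end OrbitCount

section ConjBraid

variable {G : Type*} [Group G]

def conjBraid : Perm (G × G) where
  toFun p := (p.1 * p.2 * p.1⁻¹, p.1)
  invFun q := (q.2, q.2⁻¹ * q.1 * q.2)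
  left_inv p := by simp [mul_assoc]
  right_inv q := by simp [mul_assoc]

theorem conjBraid_apply (p : G × G) : conjBraid p = (p.1 * p.2 * p.1⁻¹, p.1) := rfl

theorem conjBraid_eq_self_iff {p : G × G} : conjBraid p = p ↔ p.1 = p.2 := by
  simp only [conjBraid_apply, Prod.ext_iff, mul_inv_eq_iff_eq_mul, mul_right_inj]
  exact ⟨And.right, fun h => ⟨h.symm, h⟩⟩

theorem conjBraid_of_commute {p : G × G} (h : Commute p.1 p.2) : conjBraid p = p.swap :=
  Prod.ext (by simp [conjBraid_apply, h.eq]) rfl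

theorem conjBraid_conjBraid_of_commute {p : G × G} (h : Commute p.1 p.2) :
    conjBraid (conjBraid p) = p := by
  rw [conjBraid_of_commute h, conjBraid_of_commute h.symm, Prod.swap_swap]

theorem conjBraid_conjBraid_conjBraid_of_braid {p : G × G}
    (h : p.1 * p.2 * p.1 = p.2 * p.1 * p.2) : conjBraid (conjBraid (conjBraid p)) = p := by
  obtain ⟨x, y⟩ := p
  simp only [conjBraid_apply, Prod.ext_iff] at h ⊢
  have h2 : x * y * x⁻¹ * x * (x * y * x⁻¹)⁻¹ = y := by
    rw [show x * y * x⁻¹ * x * (x * y * x⁻¹)⁻¹ = x * y * x * y⁻¹ * x⁻¹ by group, h]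
    group
  refine ⟨?_, h2⟩
  rw [h2, show y * (x * y * x⁻¹) * y⁻¹ = y * x * y * x⁻¹ * y⁻¹ by group, ← h]
  group

end ConjBraid

namespace Equiv.Perm

variable {α : Type*} [DecidableEq α]

theorem IsSwap.conj {y : Perm α} (hy : y.IsSwap) (g : Perm α) : (g * y * g⁻¹).IsSwap := by
  obtain ⟨a, b, hab, rfl⟩ := hy
  exact ⟨g a, g b, g.injective.ne hab, (swap_apply_apply g a b).symm⟩

theorem isSwap_conj_iff {y g : Perm α} : (g * y * g⁻¹).IsSwap ↔ y.IsSwap :=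
  ⟨fun h => by simpa [mul_assoc] using h.conj g⁻¹, fun h => h.conj g⟩

theorem IsSwap.not_disjoint_self {x : Perm α} (hx : x.IsSwap) : ¬ x.Disjoint x :=
  fun h => hx.isCycle.ne_one (disjoint_refl_iff.1 h)

theorem swap_mul_swap_mul_swap_of_ne {a b c : α} (hac : a ≠ c) (hbc : b ≠ c) :
    swap a b * swap a c * swap a b = swap b c := by
  nth_rewrite 2 [← swap_inv a b]
  rw [← swap_apply_apply, swap_apply_left, swap_apply_of_ne_of_ne hac.symm hbc.symm]

theorem swap_mul_swap_mul_swap_braid {a b c : α} (hab : a ≠ b) (hac : a ≠ c) :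
    swap a b * swap a c * swap a b = swap a c * swap a b * swap a c := by
  rcases eq_or_ne b c with rfl | hbc
  · rfl
  rw [swap_mul_swap_mul_swap_of_ne hac hbc, swap_mul_swap_mul_swap_of_ne hab hbc.symm, swap_comm]

theorem IsSwap.braid_of_not_disjoint {x y : Perm α} (hx : x.IsSwap) (hy : y.IsSwap)
    (h : ¬ x.Disjoint y) : x * y * x = y * x * y := by
  obtain ⟨a, b, hab, rfl⟩ := hx
  obtain ⟨c, d, hcd, rfl⟩ := hy
  have hmeet : a = c ∨ a = d ∨ b = c ∨ b = d := by
    by_contra! hne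
    exact h (disjoint_swap_swap (by simp_all))
  rcases hmeet with rfl | rfl | rfl | rfl
  · exact swap_mul_swap_mul_swap_braid hab hcd
  · rw [swap_comm c a]; exact swap_mul_swap_mul_swap_braid hab hcd.symm
  · rw [swap_comm a b]; exact swap_mul_swap_mul_swap_braid hab.symm hcd
  · rw [swap_comm a b, swap_comm c b]; exact swap_mul_swap_mul_swap_braid hab.symm hcd.symm

theorem IsSwap.eq_of_support_eq [Fintype α] {x y : Perm α} (hx : x.IsSwap) (hy : y.IsSwap)
    (h : x.support = y.support) : x = y := by
  obtain ⟨a, b, hab, rfl⟩ := hx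
  obtain ⟨c, d, hcd, rfl⟩ := hy
  rw [support_swap hab, support_swap hcd, ← Finset.coe_inj, coe_pair, coe_pair,
    Set.pair_eq_pair_iff] at h
  rcases h with ⟨rfl, rfl⟩ | ⟨rfl, rfl⟩
  exacts [rfl, swap_comm _ _]

variable [Fintype α]

noncomputable def swapSupportEquiv : {x : Perm α // x.IsSwap} ≃ {s : Finset α // #s = 2} :=
  Equiv.ofBijective (fun x => ⟨x.1.support, card_support_eq_two.2 x.2⟩) <| by
    refine ⟨fun x y h => Subtype.ext (x.2.eq_of_support_eq y.2 (congrArg Subtype.val h)), ?_⟩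
    rintro ⟨s, hs⟩
    obtain ⟨a, b, hab, rfl⟩ := card_eq_two.1 hs
    exact ⟨⟨swap a b, a, b, hab, rfl⟩, Subtype.ext (support_swap hab)⟩

theorem natCard_isSwap : Nat.card {x : Perm α // x.IsSwap} = (Fintype.card α).choose 2 := by
  rw [Nat.card_congr swapSupportEquiv, Nat.card_eq_fintype_card, Fintype.card_finset_len]

theorem natCard_isSwap_disjoint {x : Perm α} (hx : x.IsSwap) :
    Nat.card {y : {y : Perm α // y.IsSwap} // x.Disjoint y} = (Fintype.card α - 2).choose 2 := by
  have e : {y : {y : Perm α // y.IsSwap} // x.Disjoint y} ≃ powersetCard 2 x.supportᶜ :=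
    (swapSupportEquiv.subtypeEquiv fun y => disjoint_iff_disjoint_support).trans <|
      (subtypeSubtypeEquivSubtypeInter _ _).trans <| subtypeEquivRight fun s => by
        rw [mem_powersetCard, subset_compl_iff_disjoint_left, and_comm]
  rw [Nat.card_congr e, Nat.card_eq_fintype_card, Fintype.card_coe, card_powersetCard,
    card_compl, card_support_eq_two.2 hx]

end Equiv.Perm

section SwapPair

open Equiv.Perm

abbrev SwapPair (α : Type*) [DecidableEq α] := {p : Perm α × Perm α // p.1.IsSwap ∧ p.2.IsSwap}

variable {α : Type*} [DecidableEq α]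

def swapPairBraid : Perm (SwapPair α) :=
  conjBraid.subtypePerm fun p => by
    change (p.1 * p.2 * p.1⁻¹).IsSwap ∧ p.1.IsSwap ↔ _
    rw [isSwap_conj_iff, and_comm]

theorem isFixedPt_swapPairBraid_iff {p : SwapPair α} :
    IsFixedPt swapPairBraid p ↔ p.1.1 = p.1.2 :=
  Subtype.ext_iff.trans conjBraid_eq_self_iff

theorem minimalPeriod_swapPairBraid_of_eq {p : SwapPair α} (h : p.1.1 = p.1.2) :
    minimalPeriod swapPairBraid p = 1 :=
  minimalPeriod_eq_one_iff_isFixedPt.2 (isFixedPt_swapPairBraid_iff.2 h)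

theorem minimalPeriod_swapPairBraid_of_disjoint {p : SwapPair α} (h : p.1.1.Disjoint p.1.2) :
    minimalPeriod swapPairBraid p = 2 :=
  minimalPeriod_eq_prime (Subtype.ext (conjBraid_conjBraid_of_commute (p := p.1) h.commute))
    (mt isFixedPt_swapPairBraid_iff.1 fun hp => p.2.1.not_disjoint_self (hp ▸ h))

theorem minimalPeriod_swapPairBraid_of_not_disjoint {p : SwapPair α} (hne : p.1.1 ≠ p.1.2)
    (h : ¬ p.1.1.Disjoint p.1.2) : minimalPeriod swapPairBraid p = 3 :=
  minimalPeriod_eq_prime (Subtype.ext (conjBraid_conjBraid_conjBraid_of_braid (p := p.1)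
    (p.2.1.braid_of_not_disjoint p.2.2 h))) (mt isFixedPt_swapPairBraid_iff.1 hne)

variable [Fintype α]

theorem natCard_swapPair :
    Nat.card (SwapPair α) = (Fintype.card α).choose 2 ^ 2 := by
  rw [Nat.card_congr (subtypeProdEquivProd (p := IsSwap) (q := IsSwap)), Nat.card_prod,
    natCard_isSwap, sq]

theorem natCard_swapPair_diag :
    Nat.card {p : SwapPair α // p.1.1 = p.1.2} = (Fintype.card α).choose 2 := by
  rw [← natCard_isSwap]
  exact Nat.card_congr
    { toFun p := ⟨p.1.1.1, p.1.2.1⟩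
      invFun x := ⟨⟨(x, x), x.2, x.2⟩, rfl⟩
      left_inv p := Subtype.ext (Subtype.ext (Prod.ext rfl p.2))
      right_inv _ := rfl }

theorem natCard_swapPair_disjoint :
    Nat.card {p : SwapPair α // p.1.1.Disjoint p.1.2} =
      (Fintype.card α).choose 2 * (Fintype.card α - 2).choose 2 := by
  classical
  have e : {p : SwapPair α // p.1.1.Disjoint p.1.2} ≃
      Σ x : {x : Perm α // x.IsSwap}, {y : {y : Perm α // y.IsSwap} // x.1.Disjoint y.1} :=
    (subtypeProdEquivProd.subtypeEquiv fun _ => Iff.rfl).trans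
      (subtypeProdEquivSigmaSubtype fun x y : {x : Perm α // x.IsSwap} => x.1.Disjoint y.1)
  rw [Nat.card_congr e, Nat.card_sigma,
    Finset.sum_congr rfl fun x _ => natCard_isSwap_disjoint x.2, sum_const, card_univ,
    ← Nat.card_eq_fintype_card, natCard_isSwap, smul_eq_mul]

-- The weights `1, 1/2, 1/3` of the three kinds of pairs, split so that summing them only
-- requires counting the diagonal and the disjoint pairs.
open scoped Classical in
theorem inv_minimalPeriod_swapPairBraid (p : SwapPair α) :
    (minimalPeriod swapPairBraid p : ℚ)⁻¹ = 3⁻¹ + 2 / 3 * (if p.1.1 = p.1.2 then 1 else 0) +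
      6⁻¹ * (if p.1.1.Disjoint p.1.2 then 1 else 0) := by
  by_cases hdiag : p.1.1 = p.1.2 <;> by_cases hdisj : p.1.1.Disjoint p.1.2
  · exact absurd (hdiag ▸ hdisj) p.2.1.not_disjoint_self
  · rw [minimalPeriod_swapPairBraid_of_eq hdiag, if_pos hdiag, if_neg hdisj]; norm_num
  · rw [minimalPeriod_swapPairBraid_of_disjoint hdisj, if_neg hdiag, if_pos hdisj]; norm_num
  · rw [minimalPeriod_swapPairBraid_of_not_disjoint hdiag hdisj, if_neg hdiag, if_neg hdisj]
    norm_num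

theorem natCard_quot_swapPairBraid :
    (Nat.card (Quot fun p q : SwapPair α => swapPairBraid p = q) : ℚ) =
      (((Fintype.card α).choose 2 : ℚ) ^ 2 + 2 * (Fintype.card α).choose 2) / 3 +
        (Fintype.card α).choose 2 * (Fintype.card α - 2).choose 2 / 6 := by
  classical
  rw [card_quot_eq_sum_inv_minimalPeriod,
    sum_congr rfl fun p _ => inv_minimalPeriod_swapPairBraid p, sum_add_distrib,
    sum_add_distrib, ← mul_sum, ← mul_sum, sum_boole, sum_boole, sum_const,
    card_univ, ← Fintype.card_subtype, ← Fintype.card_subtype, ← Nat.card_eq_fintype_card,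
    ← Nat.card_eq_fintype_card, ← Nat.card_eq_fintype_card, natCard_swapPair,
    natCard_swapPair_diag, natCard_swapPair_disjoint]
  push_cast
  ring

end SwapPair

namespace Nat

theorem choose_two_mul_choose_two (n : ℕ) : n.choose 2 * (n - 2).choose 2 = 6 * n.choose 4 := by
  rw [← choose_mul (by norm_num : 2 ≤ 4), mul_comm]
  rfl

variable {K : Type*} [Field K] [CharZero K]

theorem cast_choose_three (n : ℕ) : (n.choose 3 : K) = n * (n - 1) * (n - 2) / 6 := by
  rw [cast_choose_eq_descPochhammer_div]
  simp [descPochhammer_succ_eval, factorial]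

theorem cast_choose_four (n : ℕ) :
    (n.choose 4 : K) = n * (n - 1) * (n - 2) * (n - 3) / 24 := by
  rw [cast_choose_eq_descPochhammer_div]
  simp [descPochhammer_succ_eval, factorial]

end Nat

theorem transposition_rack_orbit_count_general (n : ℕ) :
    Nat.card (Quot (fun p q : {p : Perm (Fin n) × Perm (Fin n) // p.1.IsSwap ∧ p.2.IsSwap} =>
        ((p.val.1 * p.val.2 * p.val.1⁻¹, p.val.1) : Perm (Fin n) × Perm (Fin n)) = q.val)) =
      n.choose 2 + n.choose 2 * (n - 2).choose 2 / 2 + 2 * n.choose 3 ∧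
    ((Nat.card (Quot (fun p q : {p : Perm (Fin n) × Perm (Fin n) // p.1.IsSwap ∧ p.2.IsSwap} =>
        ((p.val.1 * p.val.2 * p.val.1⁻¹, p.val.1) : Perm (Fin n) × Perm (Fin n)) = q.val)) : ℤ))
        * 24 = n * (3 * (n : ℤ) ^ 3 - 10 * (n : ℤ) ^ 2 + 21 * n - 14) := by
  have hrel : (fun p q : SwapPair (Fin n) =>
      ((p.val.1 * p.val.2 * p.val.1⁻¹, p.val.1) : Perm (Fin n) × Perm (Fin n)) = q.val) =
      fun p q => swapPairBraid p = q := by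
    funext p q
    exact propext (@Subtype.ext_iff _ _ (swapPairBraid p) q).symm
  have hcard := natCard_quot_swapPairBraid (α := Fin n)
  rw [← Nat.cast_mul, Nat.choose_two_mul_choose_two, Fintype.card_fin, Nat.cast_mul] at hcard
  rw [hrel, Nat.choose_two_mul_choose_two, show 6 * n.choose 4 / 2 = 3 * n.choose 4 by omega]
  constructor
  · apply Nat.cast_injective (R := ℚ)
    push_cast
    rw [hcard, Nat.cast_choose_two, Nat.cast_choose_three, Nat.cast_choose_four]
    ring
  · have h : (Nat.card (Quot fun p q : SwapPair (Fin n) => swapPairBraid p = q) : ℚ) * 24 =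
        n * (3 * (n : ℚ) ^ 3 - 10 * n ^ 2 + 21 * n - 14) := by
      rw [hcard, Nat.cast_choose_two, Nat.cast_choose_four]
      ring
    exact_mod_cast h

/-- The number of orbits of `c(x,y) = (xyx⁻¹, x)` on pairs of transpositions of `S_n`
is `f(n) = C(n,2) + (1/2)C(n,2)C(n-2,2) + 2C(n,3) = n(3n³ - 10n² + 21n - 14)/24`. -/
theorem transposition_rack_orbit_count (n : ℕ) (hn : 3 ≤ n) :
    Nat.card (Quot (fun p q : {p : Perm (Fin n) × Perm (Fin n) // p.1.IsSwap ∧ p.2.IsSwap} =>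
        ((p.val.1 * p.val.2 * p.val.1⁻¹, p.val.1) : Perm (Fin n) × Perm (Fin n)) = q.val)) =
      n.choose 2 + n.choose 2 * (n - 2).choose 2 / 2 + 2 * n.choose 3 ∧
    ((Nat.card (Quot (fun p q : {p : Perm (Fin n) × Perm (Fin n) // p.1.IsSwap ∧ p.2.IsSwap} =>
        ((p.val.1 * p.val.2 * p.val.1⁻¹, p.val.1) : Perm (Fin n) × Perm (Fin n)) = q.val)) : ℤ))
        * 24 = n * (3 * (n : ℤ) ^ 3 - 10 * (n : ℤ) ^ 2 + 21 * n - 14) :=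
  transposition_rack_orbit_count_general n
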